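/- Lower bound on leakage: for finitely supported random variables v, v̂, d, I(v̂; d) ≥ I(v; v̂) + I(v; d) − H(v). -/

import Mathlib

open Finset

variable {Ω : Type*} [Fintype Ω]

/-- Probability that random variable `X` takes value `s`, under mass function `μ`. -/
noncomputable def probOf (μ : Ω → ℝ) {S : Type*} [DecidableEq S] (X : Ω → S) (s : S) : ℝ :=
  ∑ ω ∈ Finset.univ.filter fun ω => X ω = s, μ ω

/-- `μ` is a probability mass function on the finite sample space `Ω`. -/
def IsProbMass (μ : Ω → ℝ) : Prop := (∀ ω, 0 ≤ μ ω) ∧ ∑ ω, μ ω = 1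

/-- Shannon entropy of a finitely supported random variable. -/
noncomputable def entropy (μ : Ω → ℝ) {S : Type*} [Fintype S] [DecidableEq S]
    (X : Ω → S) : ℝ :=
  ∑ s : S, Real.negMulLog (probOf μ X s)

/-- Conditional Shannon entropy `H(X | Y) = H(X, Y) - H(Y)`. -/
noncomputable def condEntropy (μ : Ω → ℝ) {S T : Type*} [Fintype S] [DecidableEq S]
    [Fintype T] [DecidableEq T] (X : Ω → S) (Y : Ω → T) : ℝ :=
  entropy μ (fun ω => (X ω, Y ω)) - entropy μ Y

/-- Mutual information `I(X; Y) = H(X) + H(Y) - H(X, Y)`. -/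
noncomputable def mutualInfo (μ : Ω → ℝ) {S T : Type*} [Fintype S] [DecidableEq S]
    [Fintype T] [DecidableEq T] (X : Ω → S) (Y : Ω → T) : ℝ :=
  entropy μ X + entropy μ Y - entropy μ (fun ω => (X ω, Y ω))

/-- Conditional mutual information `I(X; Y | Z) = H(X,Z) + H(Y,Z) - H(X,Y,Z) - H(Z)`. -/
noncomputable def condMutualInfo (μ : Ω → ℝ) {S T U : Type*} [Fintype S] [DecidableEq S]
    [Fintype T] [DecidableEq T] [Fintype U] [DecidableEq U]
    (X : Ω → S) (Y : Ω → T) (Z : Ω → U) : ℝ :=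
  entropy μ (fun ω => (X ω, Z ω)) + entropy μ (fun ω => (Y ω, Z ω))
    - entropy μ (fun ω => (X ω, Y ω, Z ω)) - entropy μ Z

/-- Independence of two random variables: the joint distribution factorizes. -/
def IndepRV (μ : Ω → ℝ) {S T : Type*} [DecidableEq S] [DecidableEq T]
    (X : Ω → S) (Y : Ω → T) : Prop :=
  ∀ s t, probOf μ (fun ω => (X ω, Y ω)) (s, t) = probOf μ X s * probOf μ Y t

/-!
Expanding the mutual informations, the inequality reads `H(v) + H(v̂,d) ≤ H(v,v̂) + H(v,d)`.
It is the sum of two basic facts: forgetting a coordinate does not increase entropy,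
`H(v̂,d) ≤ H(v̂,d,v)`, and conditional mutual information is nonnegative,
`H(v̂,d,v) + H(v) ≤ H(v̂,v) + H(d,v)`. The latter holds fibrewise over the values of `v`: on each
fibre it is subadditivity of entropy for the restricted, unnormalised mass, i.e. Gibbs'
inequality `log x ≤ x - 1` comparing the joint table with the product of its marginals.
-/

open Real

namespace Real

lemma negMulLog_sum_le_sum_negMulLog {ι : Type*} (s : Finset ι) (f : ι → ℝ)
    (hf : ∀ i ∈ s, 0 ≤ f i) : negMulLog (∑ i ∈ s, f i) ≤ ∑ i ∈ s, negMulLog (f i) := by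
  rw [negMulLog, neg_mul, Finset.sum_mul, ← Finset.sum_neg_distrib]
  refine Finset.sum_le_sum fun i hi => ?_
  rw [negMulLog, neg_mul, neg_le_neg_iff]
  rcases (hf i hi).eq_or_lt with h | h
  · simp [← h]
  · exact mul_le_mul_of_nonneg_left (log_le_log h (Finset.single_le_sum hf hi)) h.le

lemma negMulLog_add_mul_log_le {q r k t : ℝ} (hq : 0 ≤ q) (hqr : q ≤ r) (hqk : q ≤ k)
    (ht : 0 < t) : negMulLog q + q * (log r + log k - log t) ≤ r * k / t - q := by
  rcases hq.eq_or_lt with rfl | hq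
  · have : 0 ≤ r * k / t := by positivity
    simpa using this
  have hr : 0 < r := hq.trans_le hqr
  have hk : 0 < k := hq.trans_le hqk
  have hlog : log r + log k - log t = log (r * k / t) := by
    rw [log_div (by positivity) ht.ne', log_mul hr.ne' hk.ne']
  calc negMulLog q + q * (log r + log k - log t) = q * log (r * k / t / q) := by
        rw [hlog, log_div (by positivity) hq.ne', negMulLog]; ring
    _ ≤ q * (r * k / t / q - 1) :=
        mul_le_mul_of_nonneg_left (log_le_sub_one_of_pos (by positivity)) hq.le
    _ = r * k / t - q := by field_simp

lemma sum_sum_negMulLog_add_negMulLog_sum_le {B C : Type*} [Fintype B] [Fintype C]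
    (Q : B → C → ℝ) (hQ : ∀ b c, 0 ≤ Q b c) :
    ∑ b, ∑ c, negMulLog (Q b c) + negMulLog (∑ b, ∑ c, Q b c)
      ≤ ∑ b, negMulLog (∑ c, Q b c) + ∑ c, negMulLog (∑ b, Q b c) := by
  -- Naming the marginals makes them atoms for `linarith` at the end.
  obtain ⟨r, hr⟩ : ∃ r : B → ℝ, ∀ b, ∑ c, Q b c = r b := ⟨_, fun _ => rfl⟩
  obtain ⟨k, hk⟩ : ∃ k : C → ℝ, ∀ c, ∑ b, Q b c = k c := ⟨_, fun _ => rfl⟩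
  obtain ⟨t, hrt⟩ : ∃ t, ∑ b, r b = t := ⟨_, rfl⟩
  have hkt : ∑ c, k c = t := by simp only [← hk, ← hrt, ← hr]; exact Finset.sum_comm
  simp only [hr, hk, hrt]
  have ht0 : 0 ≤ t := hrt ▸ Finset.sum_nonneg fun b _ => hr b ▸ Finset.sum_nonneg fun c _ => hQ b c
  rcases ht0.eq_or_lt with rfl | ht
  · have hQ0 : ∀ b c, Q b c = 0 := by
      simpa [← hr, Finset.sum_eq_zero_iff_of_nonneg, hQ, Finset.sum_nonneg] using hrt
    simp [hQ0, ← hr, ← hk]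
  have hterm : ∀ b c, negMulLog (Q b c) + Q b c * (log (r b) + log (k c) - log t)
      ≤ r b * k c / t - Q b c := fun b c =>
    negMulLog_add_mul_log_le (hQ b c)
      (hr b ▸ Finset.single_le_sum (fun c _ => hQ b c) (mem_univ c))
      (hk c ▸ Finset.single_le_sum (fun b _ => hQ b c) (mem_univ b)) ht
  have hsum := Finset.sum_le_sum fun b (_ : b ∈ univ) =>
    Finset.sum_le_sum fun c (_ : c ∈ univ) => hterm b c
  have hrk : ∑ b, ∑ c, (r b * k c / t - Q b c) = 0 := by
    simp only [Finset.sum_sub_distrib, ← Finset.sum_div, ← Finset.mul_sum, ← Finset.sum_mul,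
      hkt, hrt, hr]
    rw [mul_div_cancel_right₀ t ht.ne', sub_self]
  have hrow : ∑ b, ∑ c, Q b c * log (r b) = -∑ b, negMulLog (r b) := by
    simp [negMulLog, ← Finset.sum_mul, hr]
  have hcol : ∑ b, ∑ c, Q b c * log (k c) = -∑ c, negMulLog (k c) := by
    rw [Finset.sum_comm]
    simp [negMulLog, ← Finset.sum_mul, hk]
  have htot : ∑ b, ∑ c, Q b c * log t = -negMulLog t := by
    simp [negMulLog, ← Finset.sum_mul, hr, hrt]
  simp only [mul_add, mul_sub, Finset.sum_add_distrib, Finset.sum_sub_distrib] at hsum hrk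
  linarith

end Real

section Entropy

variable {μ : Ω → ℝ}

lemma probOf_nonneg (hμ : ∀ ω, 0 ≤ μ ω) {S : Type*} [DecidableEq S] (X : Ω → S) (s : S) :
    0 ≤ probOf μ X s :=
  Finset.sum_nonneg fun ω _ => hμ ω

lemma sum_probOf {S : Type*} [Fintype S] [DecidableEq S] (X : Ω → S) :
    ∑ s, probOf μ X s = ∑ ω, μ ω :=
  Finset.sum_fiberwise univ X μ

lemma probOf_comp {S T : Type*} [Fintype S] [DecidableEq S] [DecidableEq T] (X : Ω → S)
    (f : S → T) (t : T) :
    probOf μ (fun ω => f (X ω)) t = ∑ s with f s = t, probOf μ X s := by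
  rw [probOf, ← Finset.sum_fiberwise_of_maps_to (g := X) (t := univ.filter fun s => f s = t)
    (by simp)]
  refine Finset.sum_congr rfl fun s hs => Finset.sum_congr ?_ fun _ _ => rfl
  ext ω
  simp only [Finset.mem_filter, Finset.mem_univ, true_and] at hs ⊢
  exact ⟨And.right, fun h => ⟨h ▸ hs, h⟩⟩

lemma probOf_comp_equiv {S T : Type*} [DecidableEq S] [DecidableEq T] (X : Ω → S) (e : S ≃ T)
    (s : S) : probOf μ (fun ω => e (X ω)) (e s) = probOf μ X s := by
  simp only [probOf, e.apply_eq_iff_eq]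

lemma sum_probOf_prod_right {S T : Type*} [Fintype T] [DecidableEq S] [DecidableEq T]
    (X : Ω → S) (Y : Ω → T) (s : S) :
    ∑ t, probOf μ (fun ω => (X ω, Y ω)) (s, t) = probOf μ X s := by
  simp only [probOf, Finset.sum_filter, Prod.mk.injEq, ite_and]
  rw [Finset.sum_comm]
  refine Finset.sum_congr rfl fun ω _ => ?_
  split_ifs <;> simp

lemma sum_probOf_prod_left {S T : Type*} [Fintype S] [DecidableEq S] [DecidableEq T]
    (X : Ω → S) (Y : Ω → T) (t : T) :
    ∑ s, probOf μ (fun ω => (X ω, Y ω)) (s, t) = probOf μ Y t := by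
  simp only [probOf, Finset.sum_filter, Prod.mk.injEq, ite_and]
  rw [Finset.sum_comm]
  refine Finset.sum_congr rfl fun ω _ => ?_
  split_ifs <;> simp

lemma probOf_indicator {S U : Type*} [DecidableEq S] [DecidableEq U] (W : Ω → S) (Z : Ω → U)
    (w : S) (z : U) :
    probOf ({ω | Z ω = z}.indicator μ) W w = probOf μ (fun ω => (W ω, Z ω)) (w, z) := by
  simp only [probOf, Finset.sum_filter, Set.indicator_apply, Set.mem_ofPred_eq, Prod.mk.injEq,
    ite_and]

lemma sum_indicator_eq_probOf {U : Type*} [DecidableEq U] (Z : Ω → U) (z : U) :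
    ∑ ω, {ω | Z ω = z}.indicator μ ω = probOf μ Z z := by
  simp only [probOf, Finset.sum_filter, Set.indicator_apply, Set.mem_ofPred_eq]

variable {S T U : Type*} [Fintype S] [DecidableEq S] [Fintype T] [DecidableEq T]
  [Fintype U] [DecidableEq U]

lemma entropy_comp_le (hμ : ∀ ω, 0 ≤ μ ω) (X : Ω → S) (f : S → T) :
    entropy μ (fun ω => f (X ω)) ≤ entropy μ X := by
  calc entropy μ (fun ω => f (X ω))
      = ∑ t, negMulLog (∑ s with f s = t, probOf μ X s) := by simp only [entropy, probOf_comp]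
    _ ≤ ∑ t, ∑ s with f s = t, negMulLog (probOf μ X s) := Finset.sum_le_sum fun t _ =>
        negMulLog_sum_le_sum_negMulLog _ _ fun s _ => probOf_nonneg hμ X s
    _ = entropy μ X := Finset.sum_fiberwise univ f _

lemma entropy_comp_equiv (X : Ω → S) (e : S ≃ T) :
    entropy μ (fun ω => e (X ω)) = entropy μ X := by
  simp only [entropy, ← e.sum_comp, probOf_comp_equiv]

lemma entropy_prod_comm (X : Ω → S) (Y : Ω → T) :
    entropy μ (fun ω => (X ω, Y ω)) = entropy μ (fun ω => (Y ω, X ω)) :=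
  (entropy_comp_equiv (fun ω => (X ω, Y ω)) (Equiv.prodComm S T)).symm

lemma entropy_prod_add_negMulLog_sum_le (hμ : ∀ ω, 0 ≤ μ ω) (X : Ω → S) (Y : Ω → T) :
    entropy μ (fun ω => (X ω, Y ω)) + negMulLog (∑ ω, μ ω) ≤ entropy μ X + entropy μ Y := by
  have h := sum_sum_negMulLog_add_negMulLog_sum_le
    (fun s t => probOf μ (fun ω => (X ω, Y ω)) (s, t)) fun s t => probOf_nonneg hμ _ _
  have hXY : entropy μ (fun ω => (X ω, Y ω))
      = ∑ s, ∑ t, negMulLog (probOf μ (fun ω => (X ω, Y ω)) (s, t)) := Fintype.sum_prod_type _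
  have hmass : ∑ ω, μ ω = ∑ s, ∑ t, probOf μ (fun ω => (X ω, Y ω)) (s, t) := by
    rw [← sum_probOf (fun ω => (X ω, Y ω)), Fintype.sum_prod_type]
  rw [hXY, hmass]
  simp only [entropy, ← sum_probOf_prod_right X Y, ← sum_probOf_prod_left X Y]
  exact h

lemma entropy_prod_eq_sum_entropy_indicator (W : Ω → S) (Z : Ω → U) :
    entropy μ (fun ω => (W ω, Z ω)) = ∑ z, entropy ({ω | Z ω = z}.indicator μ) W := by
  rw [entropy, Fintype.sum_prod_type, Finset.sum_comm]
  simp only [entropy, probOf_indicator]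

lemma entropy_eq_sum_negMulLog_mass_indicator (Z : Ω → U) :
    entropy μ Z = ∑ z, negMulLog (∑ ω, {ω | Z ω = z}.indicator μ ω) := by
  simp only [entropy, sum_indicator_eq_probOf]

lemma condMutualInfo_nonneg (hμ : ∀ ω, 0 ≤ μ ω) (X : Ω → S) (Y : Ω → T) (Z : Ω → U) :
    0 ≤ condMutualInfo μ X Y Z := by
  have hassoc :
      entropy μ (fun ω => (X ω, Y ω, Z ω)) = entropy μ (fun ω => ((X ω, Y ω), Z ω)) :=
    entropy_comp_equiv (fun ω => ((X ω, Y ω), Z ω)) (Equiv.prodAssoc S T U)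
  rw [condMutualInfo, hassoc, entropy_prod_eq_sum_entropy_indicator X,
    entropy_prod_eq_sum_entropy_indicator Y,
    entropy_prod_eq_sum_entropy_indicator (fun ω => (X ω, Y ω)),
    entropy_eq_sum_negMulLog_mass_indicator, sub_sub, sub_nonneg, ← Finset.sum_add_distrib,
    ← Finset.sum_add_distrib]
  exact Finset.sum_le_sum fun z _ =>
    entropy_prod_add_negMulLog_sum_le (Set.indicator_nonneg fun ω _ => hμ ω) X Y

end Entropy

theorem leakage_lower_bound {V VH D : Type*} [Fintype V] [DecidableEq V] [Fintype VH] [DecidableEq VH] [Fintype D] [DecidableEq D] (μ : Ω → ℝ) (hμ : IsProbMass μ) (v : Ω → V) (vh : Ω → VH) (d : Ω → D) :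
    mutualInfo μ vh d ≥ mutualInfo μ v vh + mutualInfo μ v d - entropy μ v := by
  have hforget : entropy μ (fun ω => (vh ω, d ω)) ≤ entropy μ (fun ω => (vh ω, d ω, v ω)) :=
    entropy_comp_le hμ.1 (fun ω => (vh ω, d ω, v ω)) fun p => (p.1, p.2.1)
  have hsubmod := condMutualInfo_nonneg hμ.1 vh d v
  rw [condMutualInfo, entropy_prod_comm vh v, entropy_prod_comm d v] at hsubmod
  rw [mutualInfo, mutualInfo, mutualInfo, ge_iff_le]
  linarith
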